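/- arXiv:2303.00839 — 2 statements merged into one kernel-verified Lean document; each statement's English description precedes it below -/
import Mathlib

section
/- Suppose Γ ⊆ Λ is downward closed (if γ ∈ Γ and λ ≤ γ then λ ∈ Γ). Then D_Γ is a normal subgroup of H_Λ = Wr_{λ∈Λ} H_λ, and D_Γ equals the normal closure of the subgroup H_Γ in H_Λ. -/
open scoped Classical

noncomputable section

namespace GW

/-- The support of an element of a dependent product of groups. -/
def supp {Λ : Type*} {H : Λ → Type*} [∀ l, One (H l)] (x : ∀ l, H l) : Set Λ :=
  {l | x l ≠ 1}

/-- The restricted direct product: functions with finite support. -/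
abbrev S (Λ : Type*) (H : Λ → Type*) [∀ l, One (H l)] : Type _ :=
  {x : ∀ l, H l // (supp x).Finite}

variable {Λ : Type*} [PartialOrder Λ] (H : Λ → Type*) [∀ l, Group (H l)]

/-- The underlying function of the permutation `ξ_h`. -/
def xiFun (l : Λ) (h : H l) (x : ∀ m, H m) : ∀ m, H m :=
  Function.update x l (if ∀ n, l < n → x n = 1 then h * x l else x l)

lemma xiFun_apply_ne (l : Λ) (h : H l) (x : ∀ m, H m) {m : Λ} (hm : m ≠ l) :
    xiFun H l h x m = x m := Function.update_of_ne hm _ x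

lemma xiFun_support (l : Λ) (h : H l) (x : ∀ m, H m) :
    supp (xiFun H l h x) ⊆ insert l (supp x) := by
  intro m hm
  rcases eq_or_ne m l with rfl | hne
  · exact Set.mem_insert _ _
  · refine Set.mem_insert_of_mem _ ?_
    have : xiFun H l h x m ≠ 1 := hm
    rwa [xiFun_apply_ne H l h x hne] at this

lemma xiFun_cond (l : Λ) (h : H l) (x : ∀ m, H m) :
    (∀ n, l < n → xiFun H l h x n = 1) ↔ ∀ n, l < n → x n = 1 := by
  constructor
  · intro hc n hn
    have := hc n hn
    rwa [xiFun_apply_ne H l h x hn.ne'] at this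
  · intro hc n hn
    rw [xiFun_apply_ne H l h x hn.ne']
    exact hc n hn

lemma xiFun_inv (l : Λ) (h : H l) (x : ∀ m, H m) :
    xiFun H l h⁻¹ (xiFun H l h x) = x := by
  funext m
  rcases eq_or_ne m l with rfl | hne
  · have hyl : xiFun H m h x m = if ∀ n, m < n → x n = 1 then h * x m else x m := by
      simp [xiFun]
    show Function.update (xiFun H m h x) m
      (if ∀ n, m < n → xiFun H m h x n = 1 then h⁻¹ * xiFun H m h x m
        else xiFun H m h x m) m = x m
    rw [Function.update_self]
    by_cases hc : ∀ n, m < n → x n = 1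
    · rw [if_pos ((xiFun_cond H m h x).2 hc), hyl, if_pos hc, inv_mul_cancel_left]
    · rw [if_neg (fun hcy => hc ((xiFun_cond H m h x).1 hcy)), hyl, if_neg hc]
  · rw [xiFun_apply_ne H l h⁻¹ _ hne, xiFun_apply_ne H l h x hne]

/-- The permutation `ξ_h` of the restricted product `S`. -/
def xi (l : Λ) (h : H l) : Equiv.Perm (S Λ H) where
  toFun x := ⟨xiFun H l h x.1, (x.2.insert l).subset (xiFun_support H l h x.1)⟩
  invFun x := ⟨xiFun H l h⁻¹ x.1, (x.2.insert l).subset (xiFun_support H l h⁻¹ x.1)⟩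
  left_inv x := Subtype.ext (xiFun_inv H l h x.1)
  right_inv x := Subtype.ext (by simpa using xiFun_inv H l h⁻¹ x.1)

/-- The generalized wreath product `Wr_{λ∈Λ} H_λ` as a subgroup of `Perm S`. -/
def Wr (Λ : Type*) [PartialOrder Λ] (H : Λ → Type*) [∀ l, Group (H l)] :
    Subgroup (Equiv.Perm (S Λ H)) :=
  Subgroup.closure {e | ∃ (l : Λ) (h : H l), e = xi H l h}

/-- For `Γ ⊆ Λ`, the subgroup `H_Γ` of `Perm S` generated by the `ξ_h` with `h ∈ H_γ`, `γ ∈ Γ`. -/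
def HSub (Γ : Set Λ) : Subgroup (Equiv.Perm (S Λ H)) :=
  Subgroup.closure {e | ∃ (l : Λ) (h : H l), l ∈ Γ ∧ e = xi H l h}

/-- For `Γ ⊆ Λ`, the subgroup `D_Γ` of `H_Λ` of elements fixing all coordinates outside `Γ`. -/
def D (Γ : Set Λ) : Subgroup ↥(Wr Λ H) where
  carrier := {g | ∀ (x : S Λ H) (l : Λ), l ∉ Γ → ((g : Equiv.Perm (S Λ H)) x).1 l = x.1 l}
  one_mem' := fun _ _ _ => rfl
  mul_mem' := by
    intro a b ha hb x l hl
    have h1 := ha ((b : Equiv.Perm (S Λ H)) x) l hl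
    have h2 := hb x l hl
    simpa [h2] using h1
  inv_mem' := by
    intro a ha x l hl
    have := ha (((a : Equiv.Perm (S Λ H)))⁻¹ x) l hl
    simpa using this.symm

end GW

end

/-!
`D_Γ` consists of the elements of `H_Λ` fixing every coordinate in the upper set `Λ ∖ Γ`.
Whether `ξ_h` (`h ∈ H_λ`) acts depends only on the coordinates above `λ`, which lie outside `Γ`
when `λ` does; hence every generator preserves `∼_Γ`, and `H_Λ` normalizes `D_Γ`.
The generators with `λ ∈ Γ` lie in `D_Γ`, while those with `λ ∉ Γ` generate a subgroup `K`
fixing all coordinates in `Γ`, so `D_Γ ∩ K = 1`. As `H_Λ` is generated by `H_Γ` and `K`, every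
`g ∈ D_Γ` is `n k` with `n` in the normal closure of `H_Γ` and `k ∈ D_Γ ∩ K`, i.e. `k = 1`.
-/

open Pointwise in
theorem Subgroup.eq_of_le_of_codisjoint_of_disjoint {G : Type*} [Group G] {N D K : Subgroup G}
    [N.Normal] (hND : N ≤ D) (hNK : Codisjoint N K) (hDK : Disjoint D K) : D = N := by
  refine le_antisymm (fun g hg => ?_) hND
  obtain ⟨n, hn, k, hk, rfl⟩ : g ∈ (N : Set G) * (K : Set G) := by
    rw [← Subgroup.normal_mul, hNK.eq_top]
    trivial
  have hkD : k ∈ D := (mul_mem_cancel_left (hND hn)).1 hg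
  simpa [Subgroup.disjoint_def.1 hDK hkD hk] using hn

namespace GW

section Fix

variable {Λ : Type*} (H : Λ → Type*) [∀ l, One (H l)]

/-- The paper's relation `∼_Γ` is `AgreeOn H Γᶜ`. -/
def AgreeOn (T : Set Λ) (x y : S Λ H) : Prop := ∀ l ∈ T, x.1 l = y.1 l

def Fix (T : Set Λ) : Subgroup (Equiv.Perm (S Λ H)) where
  carrier := {e | ∀ x, AgreeOn H T (e x) x}
  one_mem' _ _ _ := rfl
  mul_mem' {a b} ha hb x l hl := (ha (b x) l hl).trans (hb x l hl)
  inv_mem' {a} ha x l hl := by simpa using (ha (a⁻¹ x) l hl).symm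

lemma mem_Fix {T : Set Λ} {e : Equiv.Perm (S Λ H)} :
    e ∈ Fix H T ↔ ∀ x, AgreeOn H T (e x) x := Iff.rfl

lemma Fix_inf_Fix_compl (T : Set Λ) : Fix H T ⊓ Fix H Tᶜ = ⊥ := by
  refine eq_bot_iff.2 fun e (he : e ∈ Fix H T ⊓ Fix H Tᶜ) => ?_
  refine Equiv.ext fun x => Subtype.ext (funext fun l => ?_)
  by_cases hl : l ∈ T
  · exact (mem_Fix H).1 he.1 x l hl
  · exact (mem_Fix H).1 he.2 x l hl

def PreservesAgreeOn (T : Set Λ) (e : Equiv.Perm (S Λ H)) : Prop :=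
  ∀ x y, AgreeOn H T x y → AgreeOn H T (e x) (e y)

lemma mem_normalizer_Fix {T : Set Λ} {e : Equiv.Perm (S Λ H)} (he : PreservesAgreeOn H T e)
    (he' : PreservesAgreeOn H T e⁻¹) : e ∈ Subgroup.normalizer (Fix H T : Set _) := by
  refine Subgroup.mem_normalizer_iff.2 fun n => ⟨fun hn x => ?_, fun hn x => ?_⟩
  · simpa using he _ _ (hn (e⁻¹ x))
  · simpa using he' _ _ (hn (e x))

end Fix

variable {Λ : Type*} [PartialOrder Λ] (H : Λ → Type*) [∀ l, Group (H l)]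

lemma D_eq_subgroupOf_Fix (Γ : Set Λ) : D H Γ = (Fix H Γᶜ).subgroupOf (Wr Λ H) := rfl

lemma HSub_le_Fix_compl (Γ : Set Λ) : HSub H Γ ≤ Fix H Γᶜ := by
  refine (Subgroup.closure_le _).2 ?_
  rintro e ⟨l, h, hl, rfl⟩ x m hm
  exact xiFun_apply_ne H l h x.1 (ne_of_mem_of_not_mem hl hm).symm

lemma HSub_sup_HSub_compl (Γ : Set Λ) : HSub H Γ ⊔ HSub H Γᶜ = Wr Λ H := by
  rw [HSub, HSub, ← Subgroup.closure_union, Wr]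
  congr 1
  ext e
  simp only [Set.mem_union, Set.mem_ofPred_eq, Set.mem_compl_iff]
  constructor
  · rintro (⟨l, h, -, rfl⟩ | ⟨l, h, -, rfl⟩) <;> exact ⟨l, h, rfl⟩
  · rintro ⟨l, h, rfl⟩
    by_cases hl : l ∈ Γ
    · exact Or.inl ⟨l, h, hl, rfl⟩
    · exact Or.inr ⟨l, h, hl, rfl⟩

lemma inv_xi (l : Λ) (h : H l) : (xi H l h)⁻¹ = xi H l h⁻¹ := Equiv.ext fun _ => rfl

lemma preservesAgreeOn_xi {T : Set Λ} (hT : IsUpperSet T) (l : Λ) (h : H l) :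
    PreservesAgreeOn H T (xi H l h) := by
  intro x y hxy m hm
  rcases eq_or_ne m l with rfl | hne
  · have hcond : (∀ n, m < n → x.1 n = 1) ↔ (∀ n, m < n → y.1 n = 1) :=
      forall_congr' fun n => imp_congr_right fun hn => by rw [hxy n (hT hn.le hm)]
    show xiFun H m h x.1 m = xiFun H m h y.1 m
    simp only [xiFun, Function.update_self, hcond, hxy m hm]
  · show xiFun H l h x.1 m = xiFun H l h y.1 m
    rw [xiFun_apply_ne H l h x.1 hne, xiFun_apply_ne H l h y.1 hne]
    exact hxy m hm

lemma Wr_le_normalizer_Fix {T : Set Λ} (hT : IsUpperSet T) :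
    Wr Λ H ≤ Subgroup.normalizer (Fix H T : Set _) := by
  refine (Subgroup.closure_le _).2 ?_
  rintro e ⟨l, h, rfl⟩
  exact mem_normalizer_Fix H (preservesAgreeOn_xi H hT l h)
    (inv_xi H l h ▸ preservesAgreeOn_xi H hT l h⁻¹)

lemma D_normal {Γ : Set Λ} (hΓ : IsLowerSet Γ) : (D H Γ).Normal := by
  rw [D_eq_subgroupOf_Fix]
  exact Subgroup.normal_subgroupOf_of_le_normalizer (Wr_le_normalizer_Fix H hΓ.compl)

lemma normalClosure_HSub_le_D {Γ : Set Λ} (hΓ : IsLowerSet Γ) :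
    Subgroup.normalClosure ((HSub H Γ).subgroupOf (Wr Λ H) : Set (Wr Λ H)) ≤ D H Γ := by
  have := D_normal H hΓ
  rw [D_eq_subgroupOf_Fix] at this ⊢
  exact Subgroup.normalClosure_le_normal (Subgroup.subgroupOf_mono _ (HSub_le_Fix_compl H Γ))

lemma codisjoint_normalClosure_HSub_HSub_compl (Γ : Set Λ) :
    Codisjoint (Subgroup.normalClosure ((HSub H Γ).subgroupOf (Wr Λ H) : Set (Wr Λ H)))
      ((HSub H Γᶜ).subgroupOf (Wr Λ H)) := by
  have hsup := HSub_sup_HSub_compl H Γ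
  rw [codisjoint_iff, eq_top_iff]
  calc ⊤ = (HSub H Γ ⊔ HSub H Γᶜ).subgroupOf (Wr Λ H) := by rw [hsup, Subgroup.subgroupOf_self]
    _ = (HSub H Γ).subgroupOf (Wr Λ H) ⊔ (HSub H Γᶜ).subgroupOf (Wr Λ H) :=
      Subgroup.subgroupOf_sup (le_sup_left.trans hsup.le) (le_sup_right.trans hsup.le)
    _ ≤ _ := sup_le_sup_right Subgroup.le_normalClosure _

lemma disjoint_D_HSub_compl (Γ : Set Λ) :
    Disjoint (D H Γ) ((HSub H Γᶜ).subgroupOf (Wr Λ H)) := by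
  rw [D_eq_subgroupOf_Fix]
  refine Subgroup.disjoint_def.2 fun {g} hgD hgK => Subtype.ext ?_
  have hg : (g : Equiv.Perm (S Λ H)) ∈ Fix H Γᶜ ⊓ Fix H Γᶜᶜ := ⟨hgD, HSub_le_Fix_compl H Γᶜ hgK⟩
  rwa [Fix_inf_Fix_compl, Subgroup.mem_bot] at hg

end GW

/-- if `Γ ⊆ Λ` is downward closed, then `D_Γ` is a normal subgroup of
`H_Λ = Wr_{λ∈Λ} H_λ`, and `D_Γ` equals the normal closure of `H_Γ` in `H_Λ`. -/
theorem d_normal_eq_normalClosure {Λ : Type*} [PartialOrder Λ] (H : Λ → Type*)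
    [∀ l, Group (H l)] (Γ : Set Λ) (hdc : ∀ ⦃g l : Λ⦄, g ∈ Γ → l ≤ g → l ∈ Γ) :
    (GW.D H Γ).Normal ∧
    GW.D H Γ = Subgroup.normalClosure
      (((GW.HSub H Γ).subgroupOf (GW.Wr Λ H) : Subgroup ↥(GW.Wr Λ H)) :
        Set ↥(GW.Wr Λ H)) := by
  have hΓ : IsLowerSet Γ := fun _ _ hle hmem => hdc hmem hle
  exact ⟨GW.D_normal H hΓ, Subgroup.eq_of_le_of_codisjoint_of_disjoint
    (GW.normalClosure_HSub_le_D H hΓ) (GW.codisjoint_normalClosure_HSub_HSub_compl H Γ)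
    (GW.disjoint_D_HSub_compl H Γ)⟩
end

section
/- Suppose Γ ⊆ Λ is downward closed (if γ ∈ Γ and λ ≤ γ then λ ∈ Γ). Then the quotient group H_Λ / D_Γ is isomorphic to the generalized wreath product Wr_{λ∈Λ\Γ} H_λ, where Λ \ Γ carries the partial order inherited from Λ. -/
/-!
Restricting coordinates to the upper set `U = Λ ∖ Γ` is a surjection `S_Λ → S_U`, and it
intertwines `ξ_h` with the identity when `λ ∈ Γ` and with `ξ_h` of `Wr_U` when `λ ∈ U`: the
condition "`x_η = 1` for all `η > λ`" only involves coordinates in `U` because `U` is upward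
closed. Hence every element of `H_Λ` descends along the restriction to an element of `Wr_U`,
uniquely by surjectivity, which gives a homomorphism `H_Λ → Wr_U`. It hits every generator, and
an element lies in its kernel exactly when it fixes all coordinates in `U`, i.e. lies in `D_Γ`.
-/

open scoped Classical

namespace Equiv.Perm

variable {α β : Type*}

def descendSubgroup (π : α → β) (K : Subgroup (Perm β)) : Subgroup (Perm α) where
  carrier := {g | ∃ e ∈ K, ∀ x, π (g x) = e (π x)}
  one_mem' := ⟨1, K.one_mem, fun _ => rfl⟩
  mul_mem' := by
    rintro a b ⟨ea, hea, ha⟩ ⟨eb, heb, hb⟩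
    exact ⟨ea * eb, K.mul_mem hea heb, fun x => by simp only [mul_apply, ha, hb]⟩
  inv_mem' := by
    rintro g ⟨e, he, hg⟩
    refine ⟨e⁻¹, K.inv_mem he, fun x => ?_⟩
    rw [eq_inv_iff_eq, ← hg, ← mul_apply, mul_inv_cancel, one_apply]

variable {π : α → β} {K : Subgroup (Perm β)}

noncomputable def descend (g : descendSubgroup π K) : K :=
  ⟨g.2.choose, g.2.choose_spec.1⟩

lemma descend_apply_comp (g : descendSubgroup π K) (x : α) :
    (descend g : Perm β) (π x) = π ((g : Perm α) x) :=
  (g.2.choose_spec.2 x).symm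

lemma descend_eq (hπ : Function.Surjective π) (g : descendSubgroup π K) {e : Perm β}
    (he : e ∈ K) (h : ∀ x, π ((g : Perm α) x) = e (π x)) : descend g = ⟨e, he⟩ :=
  Subtype.ext <| Equiv.coe_fn_injective <| hπ.injective_comp_right <|
    funext fun x => by simp only [Function.comp_apply, descend_apply_comp, h]

noncomputable def descendHom (hπ : Function.Surjective π) : descendSubgroup π K →* K where
  toFun := descend
  map_one' := descend_eq hπ 1 K.one_mem fun _ => rfl
  map_mul' a b := descend_eq hπ (a * b) (K.mul_mem (descend a).2 (descend b).2)
    fun x => by simp only [Subgroup.coe_mul, mul_apply, descend_apply_comp]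

lemma mem_ker_descendHom (hπ : Function.Surjective π) (g : descendSubgroup π K) :
    g ∈ (descendHom hπ).ker ↔ ∀ x, π ((g : Perm α) x) = π x := by
  change descend g = 1 ↔ _
  constructor
  · intro hg x
    rw [← descend_apply_comp g x, hg]
    rfl
  · exact fun hg => descend_eq hπ g K.one_mem hg

end Equiv.Perm

namespace GW

section Restrict

variable {Λ : Type*} (H : Λ → Type*) [∀ l, One (H l)] (U : Set Λ)

def restrict (x : S Λ H) : S U (fun l => H l.1) :=
  ⟨fun l => x.1 l.1, x.2.preimage Subtype.val_injective.injOn⟩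

lemma restrict_surjective : Function.Surjective (restrict H U) := by
  intro y
  refine ⟨⟨fun l => if hl : l ∈ U then y.1 ⟨l, hl⟩ else 1,
    (y.2.image Subtype.val).subset fun l hl => ?_⟩, Subtype.ext (funext fun l => dif_pos l.2)⟩
  by_cases hlU : l ∈ U
  · exact ⟨⟨l, hlU⟩, by simpa [supp, hlU] using hl, rfl⟩
  · simp [supp, hlU] at hl

lemma restrict_eq_iff (x x' : S Λ H) :
    restrict H U x = restrict H U x' ↔ ∀ l ∈ U, x.1 l = x'.1 l := by
  rw [Subtype.ext_iff, funext_iff]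
  simp only [restrict, Subtype.forall]

end Restrict

variable {Λ : Type*} [PartialOrder Λ] (H : Λ → Type*) [∀ l, Group (H l)] {U : Set Λ}

lemma restrict_xi_of_not_mem {l : Λ} (hl : l ∉ U) (h : H l) (x : S Λ H) :
    restrict H U (xi H l h x) = restrict H U x :=
  (restrict_eq_iff H U _ _).2 fun _ hm => xiFun_apply_ne H l h x.1 (ne_of_mem_of_not_mem hm hl)

lemma restrict_xi_of_mem (hU : IsUpperSet U) {l : Λ} (hl : l ∈ U) (h : H l) (x : S Λ H) :
    restrict H U (xi H l h x) = xi (fun m : U => H m.1) ⟨l, hl⟩ h (restrict H U x) := by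
  refine Subtype.ext (funext fun m => ?_)
  change xiFun H l h x.1 m.1 = xiFun (fun m : U => H m.1) ⟨l, hl⟩ h (fun m => x.1 m.1) m
  rcases eq_or_ne m ⟨l, hl⟩ with rfl | hne
  · have hcond : (∀ n, l < n → x.1 n = 1) ↔ ∀ n : U, (⟨l, hl⟩ : U) < n → x.1 n.1 = 1 :=
      ⟨fun hc n hn => hc n hn, fun hc n hn => hc ⟨n, hU hn.le hl⟩ hn⟩
    simp only [xiFun, Function.update_self, hcond]
  · rw [xiFun_apply_ne H l h x.1 (Subtype.val_injective.ne hne), xiFun_apply_ne _ _ _ _ hne]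

lemma wr_le_descendSubgroup (hU : IsUpperSet U) :
    Wr Λ H ≤ Equiv.Perm.descendSubgroup (restrict H U) (Wr U fun m => H m.1) := by
  rw [Wr, Subgroup.closure_le]
  rintro _ ⟨l, h, rfl⟩
  by_cases hl : l ∈ U
  · exact ⟨xi _ ⟨l, hl⟩ h, Subgroup.subset_closure ⟨⟨l, hl⟩, h, rfl⟩, restrict_xi_of_mem H hU hl h⟩
  · exact ⟨1, Subgroup.one_mem _, restrict_xi_of_not_mem H hl h⟩

noncomputable def wrRestrict (hU : IsUpperSet U) : Wr Λ H →* Wr U fun m => H m.1 :=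
  (Equiv.Perm.descendHom (restrict_surjective H U)).comp
    (Subgroup.inclusion (wr_le_descendSubgroup H hU))

lemma wrRestrict_surjective (hU : IsUpperSet U) : Function.Surjective (wrRestrict H hU) := by
  have hrange : Wr U (fun m => H m.1) ≤ (wrRestrict H hU).range.map (Subgroup.subtype _) := by
    refine (Subgroup.closure_le _).2 ?_
    rintro _ ⟨⟨l, hl⟩, h, rfl⟩
    refine ⟨⟨_, Subgroup.subset_closure ⟨⟨l, hl⟩, h, rfl⟩⟩,
      ⟨⟨xi H l h, Subgroup.subset_closure ⟨l, h, rfl⟩⟩, ?_⟩, rfl⟩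
    exact Equiv.Perm.descend_eq (restrict_surjective H U) _ _ (restrict_xi_of_mem H hU hl h)
  intro e
  obtain ⟨_, ⟨g, rfl⟩, hg⟩ := hrange e.2
  exact ⟨g, Subtype.ext hg⟩

lemma ker_wrRestrict (hU : IsUpperSet U) : (wrRestrict H hU).ker = D H Uᶜ := by
  ext g
  change _ ∈ (Equiv.Perm.descendHom (restrict_surjective H U)).ker ↔ _
  simp only [Equiv.Perm.mem_ker_descendHom, restrict_eq_iff]
  exact ⟨fun hg x l hl => hg x l (not_not.1 hl), fun hg x l hl => hg x l (not_not.2 hl)⟩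

end GW

/-- if `Γ ⊆ Λ` is downward closed, then the quotient group `H_Λ / D_Γ` is
isomorphic to `Wr_{λ∈Λ\Γ} H_λ` (with the inherited order); equivalently, there is a
surjective homomorphism `H_Λ → Wr_{λ∈Λ\Γ} H_λ` whose kernel is exactly `D_Γ`. -/
theorem wr_quotient_d_iso {Λ : Type*} [PartialOrder Λ] (H : Λ → Type*) [∀ l, Group (H l)]
    (Γ : Set Λ) (hdc : ∀ ⦃g l : Λ⦄, g ∈ Γ → l ≤ g → l ∈ Γ) :
    ∃ f : ↥(GW.Wr Λ H) →* ↥(GW.Wr ↥(Γᶜ) (fun l : ↥(Γᶜ) => H l.1)),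
      Function.Surjective f ∧ f.ker = GW.D H Γ := by
  have hU : IsUpperSet Γᶜ := IsLowerSet.compl fun _ _ hba ha => hdc ha hba
  exact ⟨GW.wrRestrict H hU, GW.wrRestrict_surjective H hU, by
    rw [GW.ker_wrRestrict, compl_compl]⟩
end
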